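/- Let z ∈ W^{2,2}([a,b];ℝ^{n_p}) satisfy the boundary condition B_c z_b = 0, where B_c ∈ ℝ^{2n_p×4n_p} and B_c B_d is invertible, and let C₁ ∈ ℝ^{p×4n_p} be any matrix. Define C₃(s) = −C₁ B_d B_f(s) + C₁ col(0, (b−s)I, 0, I) for s ∈ [a,b]. Then C₁ z_b = ∫ₐᵇ C₃(s) z_ss(s) ds. -/

import Mathlib

/-! Taylor's formula with integral remainder gives
`z_b = B_d col(z(a), z_s(a)) + ∫ₐᵇ col(0, (b−s)I, 0, I) z_ss(s) ds`.
The boundary condition `B_c z_b = 0` then forces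
`col(z(a), z_s(a)) = −(B_c B_d)⁻¹ B_c ∫ₐᵇ col(0, (b−s)I, 0, I) z_ss(s) ds`,
and substituting this into `C₁ z_b` produces the kernel `C₃`. -/

open MeasureTheory Matrix Set

noncomputable section

/-- The block matrix `B_d ∈ ℝ^{4n_p × 2n_p}` with block rows
`[I, 0]`, `[I, (b−a)I]`, `[0, I]`, `[0, I]`. -/
def Bdm (a b : ℝ) (np : ℕ) : Matrix (Fin 4 × Fin np) (Fin 2 × Fin np) ℝ :=
  Matrix.of fun p q =>
    (![![(1 : Matrix (Fin np) (Fin np) ℝ), 0],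
       ![1, (b - a) • 1],
       ![0, 1],
       ![0, 1]] p.1 q.1) p.2 q.2

/-- The block column `col(0, (b−η)I, 0, I) ∈ ℝ^{4n_p × n_p}`. -/
def colE (b : ℝ) (np : ℕ) (η : ℝ) : Matrix (Fin 4 × Fin np) (Fin np) ℝ :=
  Matrix.of fun p j =>
    (![(0 : Matrix (Fin np) (Fin np) ℝ), (b - η) • 1, 0, 1] p.1) p.2 j

/-- `B_f(η) = (B_c B_d)⁻¹ B_c col(0,(b−η)I,0,I)`. -/
def Bfm (a b : ℝ) {np : ℕ}
    (Bc : Matrix (Fin 2 × Fin np) (Fin 4 × Fin np) ℝ) (η : ℝ) :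
    Matrix (Fin 2 × Fin np) (Fin np) ℝ :=
  (Bc * Bdm a b np)⁻¹ * Bc * colE b np η

/-- The block row `[I, (s−a)I] ∈ ℝ^{n_p × 2n_p}`. -/
def rowIA (a : ℝ) (np : ℕ) (s : ℝ) : Matrix (Fin np) (Fin 2 × Fin np) ℝ :=
  Matrix.of fun i q => (![(1 : Matrix (Fin np) (Fin np) ℝ), (s - a) • 1] q.1) i q.2

/-- The block row `[0, I] ∈ ℝ^{n_p × 2n_p}`. -/
def rowZI (np : ℕ) : Matrix (Fin np) (Fin 2 × Fin np) ℝ :=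
  Matrix.of fun i q => (![(0 : Matrix (Fin np) (Fin np) ℝ), 1] q.1) i q.2

/-- `B_a(s,η) = −[I,(s−a)I] B_f(η)`. -/
def Bam (a b : ℝ) {np : ℕ}
    (Bc : Matrix (Fin 2 × Fin np) (Fin 4 × Fin np) ℝ) (s η : ℝ) :
    Matrix (Fin np) (Fin np) ℝ :=
  -(rowIA a np s * Bfm a b Bc η)

/-- `B_b(η) = −[0,I] B_f(η)`. -/
def Bbm (a b : ℝ) {np : ℕ}
    (Bc : Matrix (Fin 2 × Fin np) (Fin 4 × Fin np) ℝ) (η : ℝ) :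
    Matrix (Fin np) (Fin np) ℝ :=
  -(rowZI np * Bfm a b Bc η)

/-- `G₁(s,η) = B_a(s,η) + (s−η)I`. -/
def G1m (a b : ℝ) {np : ℕ}
    (Bc : Matrix (Fin 2 × Fin np) (Fin 4 × Fin np) ℝ) (s η : ℝ) :
    Matrix (Fin np) (Fin np) ℝ :=
  Bam a b Bc s η + (s - η) • 1

/-- `G₂(s,η) = B_a(s,η)`. -/
def G2m (a b : ℝ) {np : ℕ}
    (Bc : Matrix (Fin 2 × Fin np) (Fin 4 × Fin np) ℝ) (s η : ℝ) :
    Matrix (Fin np) (Fin np) ℝ :=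
  Bam a b Bc s η

/-- `G₃(s,η) = B_b(η) + I`. -/
def G3m (a b : ℝ) {np : ℕ}
    (Bc : Matrix (Fin 2 × Fin np) (Fin 4 × Fin np) ℝ) (_s η : ℝ) :
    Matrix (Fin np) (Fin np) ℝ :=
  Bbm a b Bc η + 1

/-- `G₄(s,η) = B_b(η)`. -/
def G4m (a b : ℝ) {np : ℕ}
    (Bc : Matrix (Fin 2 × Fin np) (Fin 4 × Fin np) ℝ) (_s η : ℝ) :
    Matrix (Fin np) (Fin np) ℝ :=
  Bbm a b Bc η

/-- The boundary vector `z_b = col(z(a), z(b), z_s(a), z_s(b)) ∈ ℝ^{4n_p}`. -/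
def zbv (a b : ℝ) {np : ℕ} (z zs : ℝ → Fin np → ℝ) : Fin 4 × Fin np → ℝ :=
  fun p => ![z a, z b, zs a, zs b] p.1 p.2
section Calculus

variable {E : Type*} [NormedAddCommGroup E] [NormedSpace ℝ E] [CompleteSpace E] {a b : ℝ}

theorem integral_eq_sub_of_hasDerivWithinAt_Icc {f f' : ℝ → E} (hab : a ≤ b)
    (hf : ∀ s ∈ Icc a b, HasDerivWithinAt f (f' s) (Icc a b) s)
    (hf' : IntervalIntegrable f' volume a b) :
    ∫ s in a..b, f' s = f b - f a :=
  intervalIntegral.integral_eq_sub_of_hasDeriv_right_of_le hab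
    (fun s hs => (hf s hs).continuousWithinAt)
    (fun s hs => (hf s (Ioo_subset_Icc_self hs)).mono_of_mem_nhdsWithin
      (Icc_mem_nhdsGT_of_mem ⟨hs.1.le, hs.2⟩))
    hf'

theorem integral_sub_smul_eq_taylor_remainder {f f' f'' : ℝ → E} (hab : a ≤ b)
    (hf : ∀ s ∈ Icc a b, HasDerivWithinAt f (f' s) (Icc a b) s)
    (hf' : ∀ s ∈ Icc a b, HasDerivWithinAt f' (f'' s) (Icc a b) s)
    (hf'' : IntervalIntegrable f'' volume a b) :
    ∫ s in a..b, (b - s) • f'' s = f b - f a - (b - a) • f' a := by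
  have hderiv : ∀ s ∈ Icc a b, HasDerivWithinAt (fun t => f t + (b - t) • f' t)
      ((b - s) • f'' s) (Icc a b) s := fun s hs =>
    ((hf s hs).add (((hasDerivWithinAt_id s _).const_sub b).smul (hf' s hs))).congr_deriv
      (by simp)
  rw [integral_eq_sub_of_hasDerivWithinAt_Icc hab hderiv
    (hf''.continuousOn_smul (by fun_prop))]
  simp only [sub_self, zero_smul, add_zero]
  abel

end Calculus

section PiIntegral

variable {ι : Type*} [Fintype ι] {a b : ℝ}

theorem intervalIntegrable_pi_iff {E : Type*} [NormedAddCommGroup E] {μ : Measure ℝ}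
    {g : ℝ → ι → E} :
    IntervalIntegrable g μ a b ↔ ∀ i, IntervalIntegrable (fun s => g s i) μ a b := by
  simp only [intervalIntegrable_iff, IntegrableOn, integrable_pi_iff]

theorem intervalIntegral_apply {E : Type*} [NormedAddCommGroup E] [NormedSpace ℝ E]
    [CompleteSpace E] {μ : Measure ℝ} {g : ℝ → ι → E} (hg : IntervalIntegrable g μ a b)
    (i : ι) :
    (∫ s in a..b, g s ∂μ) i = ∫ s in a..b, g s i ∂μ :=
  ((ContinuousLinearMap.proj (R := ℝ) (φ := fun _ : ι => E) i).intervalIntegral_comp_comm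
    hg).symm

variable {m : Type*} [Fintype m]

theorem intervalIntegral_mulVec (M : Matrix m ι ℝ) {μ : Measure ℝ} {g : ℝ → ι → ℝ}
    (hg : IntervalIntegrable g μ a b) :
    ∫ s in a..b, M *ᵥ g s ∂μ = M *ᵥ ∫ s in a..b, g s ∂μ :=
  (LinearMap.toContinuousLinearMap M.mulVecLin).intervalIntegral_comp_comm hg

theorem IntervalIntegrable.continuousOn_mulVec {μ : Measure ℝ} [IsLocallyFiniteMeasure μ]
    {M : ℝ → Matrix m ι ℝ} {g : ℝ → ι → ℝ}
    (hg : IntervalIntegrable g μ a b) (hM : ContinuousOn M (uIcc a b)) :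
    IntervalIntegrable (fun s => M s *ᵥ g s) μ a b := by
  refine intervalIntegrable_pi_iff.2 fun i => ?_
  have hsum : IntervalIntegrable (∑ j, fun s => M s i j * g s j) μ a b :=
    IntervalIntegrable.sum _ fun j _ => (intervalIntegrable_pi_iff.1 hg j).continuousOn_mul
      ((continuous_apply j).comp_continuousOn ((continuous_apply i).comp_continuousOn hM))
  convert hsum using 1
  ext s
  simp only [mulVec, dotProduct, Finset.sum_apply]

end PiIntegral

-- Solving the constraint for `v` (possible since `Bc * Bd` is invertible) eliminates it.
theorem mulVec_eq_of_mulVec_eq_zero {R k l n : Type*} [CommRing R] [Fintype k] [DecidableEq k]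
    [Fintype n] {Bc : Matrix k n R} {Bd : Matrix n k R} (C : Matrix l n R)
    (hdet : IsUnit (Bc * Bd).det) {v : k → R} {w : n → R} (hbc : Bc *ᵥ (Bd *ᵥ v + w) = 0) :
    C *ᵥ (Bd *ᵥ v + w) = (C - C * Bd * (Bc * Bd)⁻¹ * Bc) *ᵥ w := by
  have hv : v = -((Bc * Bd)⁻¹ * Bc) *ᵥ w := by
    have hP : (Bc * Bd) *ᵥ v = -(Bc *ᵥ w) := by
      rw [← mulVec_mulVec, eq_neg_iff_add_eq_zero, ← mulVec_add, hbc]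
    calc v = ((Bc * Bd)⁻¹ * (Bc * Bd)) *ᵥ v := by rw [nonsing_inv_mul _ hdet, one_mulVec]
      _ = _ := by rw [← mulVec_mulVec, hP, mulVec_neg, mulVec_mulVec, neg_mulVec]
  rw [hv, mulVec_add, mulVec_mulVec, mulVec_mulVec, sub_mulVec, Matrix.mul_neg, neg_mulVec,
    Matrix.mul_assoc (C * Bd)]
  abel

section Blocks

theorem continuous_colE (b : ℝ) (np : ℕ) : Continuous (colE b np) := by
  unfold colE
  fun_prop

variable {a b : ℝ} {np : ℕ}

-- The `cons_val` simproc panics on these block vectors, hence the explicit `cons_val_*` lemmas.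
theorem colE_mulVec_apply (s : ℝ) (x : Fin np → ℝ) (k : Fin 4) (i : Fin np) :
    (colE b np s *ᵥ x) (k, i) = ![0, (b - s) * x i, 0, x i] k := by
  fin_cases k <;>
    simp [colE, mulVec, dotProduct, one_apply, -cons_val, cons_val_two, cons_val_three]

theorem Bdm_mulVec_apply (x y : Fin np → ℝ) (k : Fin 4) (i : Fin np) :
    (Bdm a b np *ᵥ fun q => ![x, y] q.1 q.2) (k, i)
      = ![x i, x i + (b - a) * y i, y i, y i] k := by
  fin_cases k <;> simp [Bdm, mulVec, dotProduct, Fintype.sum_prod_type, one_apply, -cons_val,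
    cons_val_two, cons_val_three]

theorem zbv_eq_Bdm_mulVec_add_integral {z zs zss : ℝ → Fin np → ℝ} (hab : a ≤ b)
    (hz : ∀ s ∈ Icc a b, HasDerivWithinAt z (zs s) (Icc a b) s)
    (hzs : ∀ s ∈ Icc a b, HasDerivWithinAt zs (zss s) (Icc a b) s)
    (hzss : IntervalIntegrable zss volume a b) :
    zbv a b z zs = Bdm a b np *ᵥ (fun q => ![z a, zs a] q.1 q.2)
      + ∫ s in a..b, colE b np s *ᵥ zss s := by
  ext ⟨k, i⟩
  have hzi s hs := hasDerivWithinAt_pi.1 (hz s hs) i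
  have hzsi s hs := hasDerivWithinAt_pi.1 (hzs s hs) i
  have hzssi := intervalIntegrable_pi_iff.1 hzss i
  have hfirst := integral_eq_sub_of_hasDerivWithinAt_Icc hab hzsi hzssi
  have hsecond := integral_sub_smul_eq_taylor_remainder hab hzi hzsi hzssi
  simp only [smul_eq_mul] at hsecond
  rw [Pi.add_apply, Bdm_mulVec_apply,
    intervalIntegral_apply (hzss.continuousOn_mulVec (continuous_colE b np).continuousOn)]
  simp only [colE_mulVec_apply]
  fin_cases k <;> simp [zbv, hfirst, hsecond, -cons_val, cons_val_two, cons_val_three]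

end Blocks

/-- If `z ∈ W^{2,2}([a,b];ℝ^{n_p})` satisfies `B_c z_b = 0` with
`B_c B_d` invertible, and `C₃(s) = −C₁ B_d B_f(s) + C₁ col(0,(b−s)I,0,I)`, then
`C₁ z_b = ∫ₐᵇ C₃(s) z_ss(s) ds` for any matrix `C₁ ∈ ℝ^{p × 4n_p}`. -/
theorem C1zb_from_zss {np p : ℕ} (a b : ℝ) (hab : a < b)
    (z zs zss : ℝ → Fin np → ℝ)
    (hz : ∀ s ∈ Icc a b, HasDerivWithinAt z (zs s) (Icc a b) s)
    (hzs : ∀ s ∈ Icc a b, HasDerivWithinAt zs (zss s) (Icc a b) s)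
    (hzss : MemLp zss 2 (volume.restrict (Icc a b)))
    (Bc : Matrix (Fin 2 × Fin np) (Fin 4 × Fin np) ℝ)
    (hdet : IsUnit (Bc * Bdm a b np).det)
    (hbc : Bc.mulVec (zbv a b z zs) = 0)
    (C1 : Matrix (Fin p) (Fin 4 × Fin np) ℝ) :
    C1.mulVec (zbv a b z zs)
      = fun i => ∫ s in a..b,
          ((-(C1 * Bdm a b np * Bfm a b Bc s) + C1 * colE b np s)).mulVec (zss s) i := by
  have hzss' : IntervalIntegrable zss volume a b :=
    (intervalIntegrable_iff_integrableOn_Icc_of_le hab.le).2 (hzss.integrable one_le_two)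
  have hw := hzss'.continuousOn_mulVec (continuous_colE b np).continuousOn
  set K := C1 - C1 * Bdm a b np * (Bc * Bdm a b np)⁻¹ * Bc
  have hC3 (s : ℝ) : -(C1 * Bdm a b np * Bfm a b Bc s) + C1 * colE b np s = K * colE b np s := by
    simp only [K, Bfm, Matrix.sub_mul, Matrix.mul_assoc]
    abel
  rw [zbv_eq_Bdm_mulVec_add_integral hab.le hz hzs hzss'] at hbc ⊢
  rw [mulVec_eq_of_mulVec_eq_zero C1 hdet hbc, ← intervalIntegral_mulVec K hw]
  funext i
  simp only [hC3, ← mulVec_mulVec]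
  exact intervalIntegral_apply (hw.continuousOn_mulVec continuousOn_const) i

end
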